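/- For the function ξ defined on [1/2, 1] by ξ(γ) = 2 − log₂ γ − (1/γ)·Σ_{k≥1} k·ε_k/2^k (binary digits with infinitely many zeros), the left limit at 1 satisfies lim_{γ→1⁻} ξ(γ) = 0. -/

import Mathlib

/-!
For `1 - 2⁻ⁿ ≤ γ < 1` the first `n` binary digits of `γ` are all `1`, so each digit tends to `1`
as `γ → 1⁻`. The series `∑ k ε_k 2⁻ᵏ` is dominated termwise by `∑ k 2⁻ᵏ = 2`, hence by Tannery's
theorem it tends to `2`, while `log₂ γ → 0` and `γ⁻¹ → 1`; so `ξ(γ) → 2 - 0 - 2 = 0`.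
-/

open Filter

/-- The `k`-th binary digit of `x` (for `k ≥ 1`), via the floor expansion; this is the
expansion with infinitely many zero digits. -/
noncomputable def binDigit (x : ℝ) (k : ℕ) : ℤ :=
  ⌊2 ^ k * x⌋ - 2 * ⌊2 ^ (k - 1) * x⌋

/-- `ξ(γ) = 2 − log₂ γ − (1/γ) Σ_{k≥1} k ε_k 2^{-k}`. -/
noncomputable def xiSteinhaus (γ : ℝ) : ℝ :=
  2 - Real.logb 2 γ - (1 / γ) * ∑' k : ℕ, ((k + 1 : ℕ) : ℝ) * (binDigit γ (k + 1) : ℝ) / 2 ^ (k + 1)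

open Topology Set

lemma binDigit_succ (x : ℝ) (k : ℕ) :
    binDigit x (k + 1) = ⌊2 * (2 ^ k * x)⌋ - 2 * ⌊2 ^ k * x⌋ := by
  simp [binDigit, pow_succ, mul_comm, mul_left_comm]

lemma binDigit_succ_nonneg (x : ℝ) (k : ℕ) : 0 ≤ binDigit x (k + 1) := by
  rw [binDigit_succ]
  have : 2 * ⌊2 ^ k * x⌋ ≤ ⌊2 * (2 ^ k * x)⌋ :=
    Int.le_floor.2 (by push_cast; linarith [Int.floor_le (2 ^ k * x)])
  omega

lemma binDigit_succ_le_one (x : ℝ) (k : ℕ) : binDigit x (k + 1) ≤ 1 := by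
  rw [binDigit_succ]
  have : ⌊2 * (2 ^ k * x)⌋ < 2 * ⌊2 ^ k * x⌋ + 2 := by
    rw [Int.floor_lt]; push_cast; linarith [Int.lt_floor_add_one (2 ^ k * x)]
  omega

lemma floor_two_pow_mul_eq {x : ℝ} {n : ℕ} (hx : x ∈ Ico (1 - 1 / 2 ^ n) 1) :
    ⌊(2 : ℝ) ^ n * x⌋ = 2 ^ n - 1 := by
  have hpos : (0 : ℝ) < 2 ^ n := by positivity
  have hlow : (2 : ℝ) ^ n - 1 ≤ 2 ^ n * x := by
    have := mul_le_mul_of_nonneg_left hx.1 hpos.le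
    rwa [mul_sub, mul_one, mul_one_div_cancel hpos.ne'] at this
  rw [Int.floor_eq_iff]
  push_cast
  constructor <;> nlinarith [hx.2]

lemma binDigit_succ_eq_one {x : ℝ} {k : ℕ} (hx : x ∈ Ico (1 - 1 / 2 ^ (k + 1)) 1) :
    binDigit x (k + 1) = 1 := by
  have hx' : x ∈ Ico (1 - 1 / 2 ^ k) 1 := by
    refine ⟨le_trans ?_ hx.1, hx.2⟩
    gcongr
    · norm_num
    · omega
  rw [binDigit, floor_two_pow_mul_eq hx, Nat.add_sub_cancel, floor_two_pow_mul_eq hx']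
  ring

lemma eventually_binDigit_succ_eq_one (k : ℕ) :
    ∀ᶠ x in 𝓝[<] (1 : ℝ), binDigit x (k + 1) = 1 :=
  eventually_of_mem (Ico_mem_nhdsLT (by simp)) fun _ hx ↦ binDigit_succ_eq_one hx

lemma hasSum_succ_div_two_pow : HasSum (fun k : ℕ ↦ ((k + 1 : ℕ) : ℝ) / 2 ^ (k + 1)) 2 := by
  have h := hasSum_coe_mul_geometric_of_norm_lt_one (r := (1 / 2 : ℝ)) (by norm_num)
  rw [← hasSum_nat_add_iff' 1] at h
  norm_num at h
  exact h.congr_fun fun k ↦ by push_cast; rw [div_eq_mul_one_div, one_div_pow]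

lemma tendsto_tsum_binDigit_nhdsLT_one :
    Tendsto (fun x ↦ ∑' k : ℕ, ((k + 1 : ℕ) : ℝ) * (binDigit x (k + 1) : ℝ) / 2 ^ (k + 1))
      (𝓝[<] 1) (𝓝 2) := by
  refine (tendsto_tsum_of_dominated_convergence hasSum_succ_div_two_pow.summable (fun k ↦ ?_)
    (Eventually.of_forall fun x k ↦ ?_)).mono_right
    (congrArg 𝓝 hasSum_succ_div_two_pow.tsum_eq).le
  · refine tendsto_const_nhds.congr' ?_
    filter_upwards [eventually_binDigit_succ_eq_one k] with x hx
    simp [hx]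
  · have h0 : (0 : ℝ) ≤ binDigit x (k + 1) := mod_cast binDigit_succ_nonneg x k
    have h1 : (binDigit x (k + 1) : ℝ) ≤ 1 := mod_cast binDigit_succ_le_one x k
    rw [Real.norm_of_nonneg (by positivity)]
    gcongr
    exact mul_le_of_le_one_right (by positivity) h1

theorem tendsto_xiSteinhaus_nhdsLT_one : Tendsto xiSteinhaus (𝓝[<] 1) (𝓝 0) := by
  have hlog : Tendsto (Real.logb 2) (𝓝[<] 1) (𝓝 0) := by
    simpa using (Real.continuousAt_logb one_ne_zero).tendsto.mono_left nhdsWithin_le_nhds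
  have hinv : Tendsto (fun γ : ℝ ↦ 1 / γ) (𝓝[<] 1) (𝓝 1) := by
    simpa using (continuousAt_inv₀ (one_ne_zero (α := ℝ))).tendsto.mono_left nhdsWithin_le_nhds
  unfold xiSteinhaus
  simpa using (tendsto_const_nhds (x := (2 : ℝ))).sub hlog |>.sub
    (hinv.mul tendsto_tsum_binDigit_nhdsLT_one)

/-- the left limit of `ξ` at `1` (within `[1/2, 1)`) is `0`. -/
theorem xiSteinhaus_left_limit_at_one :
    Tendsto xiSteinhaus (nhdsWithin 1 (Set.Ico (1 / 2 : ℝ) 1)) (nhds 0) :=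
  tendsto_xiSteinhaus_nhdsLT_one.mono_left (nhdsWithin_mono _ Ico_subset_Iio_self)
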